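/- Let M be a Hermitian-preserving linear map from d_A×d_A complex matrices to d_B×d_B complex matrices (i.e., M(Xᴴ) = M(X)ᴴ for all X), and let ‖M‖₁ := sup over nonzero d_A×d_A matrices O of ‖M(O)‖₁/‖O‖₁ be its induced trace norm. Then for every finite dimension d_E and every unit vector Ψ ∈ ℂ^{d_A} ⊗ ℂ^{d_E}, one has ‖(M ⊗ id_E)(|Ψ⟩⟨Ψ|)‖₁ ≤ d_A·‖M‖₁, where M ⊗ id_E acts as M on the first tensor factor and as the identity on the second. -/

import Mathlib

open Matrix ComplexOrder

/-- Trace norm of a square complex matrix. -/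
noncomputable def traceNorm {n : Type*} [Fintype n] [DecidableEq n]
    (X : Matrix n n ℂ) : ℝ :=
  (((Matrix.posSemidef_conjTranspose_mul_self X).1.eigenvectorUnitary.1 *
      diagonal (((↑) : ℝ → ℂ) ∘ (√·) ∘ (Matrix.posSemidef_conjTranspose_mul_self X).1.eigenvalues) *
      (star (Matrix.posSemidef_conjTranspose_mul_self X).1.eigenvectorUnitary :
        Matrix n n ℂ)).trace).re

/-- A density matrix: positive semidefinite with unit trace. -/
def IsDensityMatrix {n : Type*} [Fintype n] [DecidableEq n] (ρ : Matrix n n ℂ) : Prop :=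
  ρ.PosSemidef ∧ ρ.trace = 1

/-- A quantum channel: a linear map admitting a Kraus representation. -/
def IsQuantumChannel {dA dB : ℕ}
    (N : Matrix (Fin dA) (Fin dA) ℂ →ₗ[ℂ] Matrix (Fin dB) (Fin dB) ℂ) : Prop :=
  ∃ (k : ℕ) (K : Fin k → Matrix (Fin dB) (Fin dA) ℂ),
    (∀ X, N X = ∑ i, K i * X * (K i)ᴴ) ∧ (∑ i, (K i)ᴴ * K i = 1)

/-- Maximum causal effect. -/
noncomputable def CEmax {dA dB : ℕ}
    (N : Matrix (Fin dA) (Fin dA) ℂ →ₗ[ℂ] Matrix (Fin dB) (Fin dB) ℂ) : ℝ :=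
  sSup {x : ℝ | ∃ ρ ρ' : Matrix (Fin dA) (Fin dA) ℂ,
    IsDensityMatrix ρ ∧ IsDensityMatrix ρ' ∧ ρ ≠ ρ' ∧
    x = traceNorm (N ρ - N ρ') / traceNorm (ρ - ρ')}

/-- Minimum causal effect. -/
noncomputable def CEmin {dA dB : ℕ}
    (N : Matrix (Fin dA) (Fin dA) ℂ →ₗ[ℂ] Matrix (Fin dB) (Fin dB) ℂ) : ℝ :=
  sInf {x : ℝ | ∃ ρ ρ' : Matrix (Fin dA) (Fin dA) ℂ,
    IsDensityMatrix ρ ∧ IsDensityMatrix ρ' ∧ ρ ≠ ρ' ∧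
    x = traceNorm (N ρ - N ρ') / traceNorm (ρ - ρ')}

/-- Minimum distinguishability preservation. -/
noncomputable def DPmin {dA dB : ℕ}
    (N : Matrix (Fin dA) (Fin dA) ℂ →ₗ[ℂ] Matrix (Fin dB) (Fin dB) ℂ) : ℝ :=
  sInf {x : ℝ | ∃ p : ℝ, 0 ≤ p ∧ p ≤ 1 ∧
    ∃ ρ ρ' : Matrix (Fin dA) (Fin dA) ℂ,
      IsDensityMatrix ρ ∧ IsDensityMatrix ρ' ∧ ρ ≠ ρ' ∧
      x = traceNorm ((p : ℂ) • N ρ - ((1 - p : ℝ) : ℂ) • N ρ') /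
          traceNorm ((p : ℂ) • ρ - ((1 - p : ℝ) : ℂ) • ρ')}

/-!
Write `Ψ = ∑ₐ |a⟩ ⊗ wₐ`. Then `(M ⊗ id)(|Ψ⟩⟨Ψ|) = ∑_{a,a'} M(|a⟩⟨a'|) ⊗ |wₐ⟩⟨w_{a'}|`. The trace
norm is subadditive and multiplicative on Kronecker products, `‖|a⟩⟨a'|‖₁ = 1` and
`‖|w⟩⟨w'|‖₁ ≤ ‖w‖ ‖w'‖`, so the trace norm is at most `‖M‖₁ (∑ₐ ‖wₐ‖)² ≤ d_A ‖M‖₁` by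
Cauchy–Schwarz, since `∑ₐ ‖wₐ‖² = ‖Ψ‖² = 1`.

Subadditivity comes from the duality `‖X‖₁ = max {|tr (B X)| : ‖B‖ ≤ 1}` (operator norm), whose
maximum is attained at `B = Vᴴ` for the polar decomposition `X = V |X|`, `V = X |X|⁺`.
-/

open scoped MatrixOrder Matrix.Norms.L2Operator Kronecker InnerProductSpace

namespace Matrix

variable {n : Type*} [Fintype n] [DecidableEq n]

lemma l2_opNorm_le_one_of_isStarProjection {V : Matrix n n ℂ}
    (h : IsStarProjection (Vᴴ * V)) : ‖V‖ ≤ 1 := by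
  have := h.norm_le
  rw [l2_opNorm_conjTranspose_mul_self] at this
  nlinarith [norm_nonneg V]

lemma l2_opNorm_single_one_le (i j : n) : ‖single i j (1 : ℂ)‖ ≤ 1 := by
  refine l2_opNorm_le_one_of_isStarProjection ?_
  rw [conjTranspose_single, star_one, single_mul_single_same, one_mul]
  refine ⟨by rw [IsIdempotentElem, single_mul_single_same, one_mul], ?_⟩
  change (single j j (1 : ℂ))ᴴ = _
  rw [conjTranspose_single, star_one]

lemma norm_entry_le_l2_opNorm {m : Type*} [Fintype m] (A : Matrix m n ℂ) (i : m) (j : n) :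
    ‖A i j‖ ≤ ‖A‖ := by
  have h := A.l2_opNorm_mulVec (EuclideanSpace.single j 1)
  rw [PiLp.norm_single, norm_one, mul_one] at h
  calc ‖A i j‖
      = ‖((EuclideanSpace.equiv m ℂ).symm (A *ᵥ (EuclideanSpace.single j 1).ofLp)).ofLp i‖ := by
        simp
    _ ≤ _ := PiLp.norm_apply_le _ i
    _ ≤ ‖A‖ := h

lemma PosSemidef.norm_trace_mul_le {C S : Matrix n n ℂ} (hS : S.PosSemidef) (hC : ‖C‖ ≤ 1) :
    ‖(C * S).trace‖ ≤ S.trace.re := by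
  set U : Matrix n n ℂ := (hS.1.eigenvectorUnitary : Matrix n n ℂ)
  have hU : U ∈ unitary (Matrix n n ℂ) := hS.1.eigenvectorUnitary.2
  have hW : ‖star U * C * U‖ ≤ 1 := by
    rwa [CStarRing.norm_mul_mem_unitary _ hU,
      CStarRing.norm_mem_unitary_mul _ (Unitary.star_mem hU)]
  have hCS : (C * S).trace = ∑ i, (star U * C * U) i i * hS.1.eigenvalues i := by
    conv_lhs => rw [hS.1.spectral_theorem, Unitary.conjStarAlgAut_apply]
    rw [← mul_assoc, ← mul_assoc, trace_mul_comm, ← mul_assoc, ← mul_assoc]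
    simp only [trace, diag, mul_diagonal, Function.comp_apply]
    rfl
  rw [hCS, hS.1.trace_eq_sum_eigenvalues, Complex.re_sum]
  refine (norm_sum_le _ _).trans (Finset.sum_le_sum fun i _ => ?_)
  rw [norm_mul, Complex.norm_real, Real.norm_of_nonneg (hS.eigenvalues_nonneg i)]
  simpa using mul_le_of_le_one_left (hS.eigenvalues_nonneg i)
    ((norm_entry_le_l2_opNorm _ i i).trans hW)

lemma exists_polar_decomposition (X : Matrix n n ℂ) :
    ∃ V : Matrix n n ℂ, ‖V‖ ≤ 1 ∧ V * CFC.abs X = X ∧ Vᴴ * X = CFC.abs X := by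
  set S := CFC.abs X
  -- the pseudo-inverse of `S`, thanks to `(0 : ℝ)⁻¹ = 0`; `Q * S` is the projection onto `range S`
  set Q := cfc (·⁻¹ : ℝ → ℝ) S
  have hS : Sᴴ = S := (CFC.abs_nonneg X).isSelfAdjoint
  have hQ : Qᴴ = Q := (cfc_predicate _ S : IsSelfAdjoint Q)
  have hSS : S * S = Xᴴ * X := CFC.abs_mul_abs X
  have hcomm : S * Q = Q * S := by
    simpa only [cfc_id' ℝ S] using (cfc_commute_cfc (fun x : ℝ => x) (·⁻¹) S).eq
  have hSQS : S * Q * S = S := by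
    have hc : ∀ f : ℝ → ℝ, ContinuousOn f (spectrum ℝ S) := S.finite_real_spectrum.continuousOn
    conv_rhs => rw [← cfc_id' ℝ S, ← cfc_congr (fun x _ => mul_inv_mul_cancel x),
      cfc_mul _ _ _ (hc _) (hc _), cfc_mul _ _ _ (hc _) (hc _), cfc_id' ℝ S]
  have hXQS : X * (Q * S) = X := by
    have hker : S * (1 - Q * S) = 0 := by rw [mul_sub, mul_one, ← mul_assoc, hSQS, sub_self]
    have h : (X * (1 - Q * S))ᴴ * (X * (1 - Q * S)) = 0 := by
      rw [conjTranspose_mul, mul_assoc, ← mul_assoc Xᴴ, ← hSS, mul_assoc, hker, mul_zero,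
        mul_zero]
    rwa [conjTranspose_mul_self_eq_zero, mul_sub, mul_one, sub_eq_zero, eq_comm] at h
  refine ⟨X * Q, l2_opNorm_le_one_of_isStarProjection ?_, by rw [mul_assoc, hXQS], ?_⟩
  · have hP : (X * Q)ᴴ * (X * Q) = Q * S := by
      calc (X * Q)ᴴ * (X * Q) = Q * (S * S) * Q := by
            rw [conjTranspose_mul, hQ, hSS]; simp only [mul_assoc]
        _ = Q * (S * Q * S) := by rw [mul_assoc S Q S, ← hcomm]; simp only [mul_assoc]
        _ = Q * S := by rw [hSQS]
    rw [hP]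
    refine ⟨by rw [IsIdempotentElem, mul_assoc, ← mul_assoc S, hSQS], ?_⟩
    change (Q * S)ᴴ = Q * S
    rw [conjTranspose_mul, hQ, hS, hcomm]
  · rw [conjTranspose_mul, hQ, mul_assoc, ← hSS, ← mul_assoc, ← hcomm, hSQS]

lemma cfcAbs_kronecker {m : Type*} [Fintype m] [DecidableEq m] (A : Matrix m m ℂ)
    (B : Matrix n n ℂ) : CFC.abs (A ⊗ₖ B) = CFC.abs A ⊗ₖ CFC.abs B :=
  CFC.sqrt_unique (by
    rw [← mul_kronecker_mul, CFC.abs_mul_abs, CFC.abs_mul_abs]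
    simp only [star_eq_conjTranspose, conjTranspose_kronecker, mul_kronecker_mul])
    ((CFC.abs_nonneg A).posSemidef.kronecker (CFC.abs_nonneg B).posSemidef).nonneg

end Matrix

section TraceNorm

variable {n : Type*} [Fintype n] [DecidableEq n]

lemma ofReal_traceNorm (X : Matrix n n ℂ) : (traceNorm X : ℂ) = (CFC.abs X).trace := by
  have hQ := posSemidef_conjTranspose_mul_self X
  have habs : CFC.abs X = hQ.1.eigenvectorUnitary.1 *
      diagonal (((↑) : ℝ → ℂ) ∘ (√·) ∘ hQ.1.eigenvalues) *
        (star hQ.1.eigenvectorUnitary : Matrix n n ℂ) := by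
    rw [CFC.abs, star_eq_conjTranspose, CFC.sqrt_eq_real_sqrt _ hQ.nonneg, cfcₙ_eq_cfc,
      hQ.1.cfc_eq]
    simp [IsHermitian.cfc, Unitary.conjStarAlgAut_apply]
  rw [traceNorm, ← habs]
  exact Complex.ext (Complex.ofReal_re _)
    (Complex.nonneg_iff.mp (CFC.abs_nonneg X).posSemidef.trace_nonneg).2

lemma norm_trace_mul_le_traceNorm {B : Matrix n n ℂ} (hB : ‖B‖ ≤ 1) (X : Matrix n n ℂ) :
    ‖(B * X).trace‖ ≤ traceNorm X := by
  obtain ⟨V, hV, hVX, -⟩ := exists_polar_decomposition X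
  have h := (CFC.abs_nonneg X).posSemidef.norm_trace_mul_le
    ((l2_opNorm_mul B V).trans (mul_le_one₀ hB (norm_nonneg V) hV))
  rwa [mul_assoc, hVX, ← ofReal_traceNorm, Complex.ofReal_re] at h

lemma traceNorm_nonneg (X : Matrix n n ℂ) : 0 ≤ traceNorm X :=
  (norm_nonneg _).trans (norm_trace_mul_le_traceNorm (B := 0) (by simp) X)

lemma exists_traceNorm_eq_norm_trace_mul (X : Matrix n n ℂ) :
    ∃ B : Matrix n n ℂ, ‖B‖ ≤ 1 ∧ traceNorm X = ‖(B * X).trace‖ := by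
  obtain ⟨V, hV, -, hVX⟩ := exists_polar_decomposition X
  refine ⟨Vᴴ, by rwa [l2_opNorm_conjTranspose], ?_⟩
  rw [hVX, ← ofReal_traceNorm, Complex.norm_real, Real.norm_of_nonneg (traceNorm_nonneg X)]

lemma traceNorm_sum_le {ι : Type*} (s : Finset ι) (f : ι → Matrix n n ℂ) :
    traceNorm (∑ i ∈ s, f i) ≤ ∑ i ∈ s, traceNorm (f i) := by
  obtain ⟨B, hB, h⟩ := exists_traceNorm_eq_norm_trace_mul (∑ i ∈ s, f i)
  rw [h, Finset.mul_sum, trace_sum]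
  exact (norm_sum_le _ _).trans (Finset.sum_le_sum fun i _ => norm_trace_mul_le_traceNorm hB _)

lemma traceNorm_smul_le (c : ℂ) (X : Matrix n n ℂ) :
    traceNorm (c • X) ≤ ‖c‖ * traceNorm X := by
  obtain ⟨B, hB, h⟩ := exists_traceNorm_eq_norm_trace_mul (c • X)
  rw [h, Matrix.mul_smul, trace_smul, norm_smul]
  exact mul_le_mul_of_nonneg_left (norm_trace_mul_le_traceNorm hB X) (norm_nonneg c)

lemma norm_entry_le_traceNorm (X : Matrix n n ℂ) (i j : n) : ‖X i j‖ ≤ traceNorm X := by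
  simpa [trace_single_mul] using norm_trace_mul_le_traceNorm (l2_opNorm_single_one_le j i) X

lemma traceNorm_vecMulVec_le (u v : EuclideanSpace ℂ n) :
    traceNorm (vecMulVec u (star v)) ≤ ‖u‖ * ‖v‖ := by
  obtain ⟨B, hB, h⟩ := exists_traceNorm_eq_norm_trace_mul (vecMulVec u (star v))
  have hinner : (B * vecMulVec u (star v)).trace =
      ⟪v, (EuclideanSpace.equiv n ℂ).symm (B *ᵥ u)⟫_ℂ := by
    rw [mul_vecMulVec, trace_vecMulVec]
    rfl
  rw [h, hinner]
  calc _ ≤ ‖v‖ * ‖(EuclideanSpace.equiv n ℂ).symm (B *ᵥ u)‖ := norm_inner_le_norm _ _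
    _ ≤ ‖v‖ * ‖u‖ := mul_le_mul_of_nonneg_left
          ((B.l2_opNorm_mulVec u).trans (mul_le_of_le_one_left (norm_nonneg u) hB))
          (norm_nonneg v)
    _ = ‖u‖ * ‖v‖ := mul_comm _ _

lemma traceNorm_single_one (i j : n) : traceNorm (single i j (1 : ℂ)) = 1 := by
  refine le_antisymm ?_ (by simpa using norm_entry_le_traceNorm (single i j (1 : ℂ)) i j)
  have h := traceNorm_vecMulVec_le (EuclideanSpace.single i (1 : ℂ)) (EuclideanSpace.single j 1)
  rw [PiLp.norm_single, PiLp.norm_single, norm_one, mul_one] at h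
  have hE : single i j (1 : ℂ) = vecMulVec (EuclideanSpace.single i (1 : ℂ)).ofLp
      (star (EuclideanSpace.single j (1 : ℂ)).ofLp) := by
    rw [single_eq_single_vecMulVec_single]
    simp
  rwa [hE]

lemma traceNorm_kronecker {m : Type*} [Fintype m] [DecidableEq m] (A : Matrix m m ℂ)
    (B : Matrix n n ℂ) : traceNorm (A ⊗ₖ B) = traceNorm A * traceNorm B := by
  apply Complex.ofReal_injective
  rw [Complex.ofReal_mul, ofReal_traceNorm, ofReal_traceNorm, ofReal_traceNorm, cfcAbs_kronecker,
    trace_kronecker]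

end TraceNorm

section InducedTraceNorm

variable {m n : Type*} [Fintype m] [DecidableEq m] [Fintype n] [DecidableEq n]

noncomputable def inducedTraceNorm (M : Matrix m m ℂ →ₗ[ℂ] Matrix n n ℂ) : ℝ :=
  sSup {x : ℝ | ∃ O : Matrix m m ℂ, O ≠ 0 ∧ x = traceNorm (M O) / traceNorm O}

lemma traceNorm_apply_le_sum_single_mul (M : Matrix m m ℂ →ₗ[ℂ] Matrix n n ℂ)
    (O : Matrix m m ℂ) :
    traceNorm (M O) ≤ (∑ a, ∑ a', traceNorm (M (single a a' 1))) * traceNorm O := by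
  have hO : M O = ∑ a, ∑ a', O a a' • M (single a a' 1) := by
    conv_lhs => rw [matrix_eq_sum_single O]
    simp only [map_sum, ← map_smul, smul_single, smul_eq_mul, mul_one]
  rw [hO, Finset.sum_mul]
  refine (traceNorm_sum_le _ _).trans (Finset.sum_le_sum fun a _ => ?_)
  rw [Finset.sum_mul]
  refine (traceNorm_sum_le _ _).trans (Finset.sum_le_sum fun a' _ => ?_)
  rw [mul_comm]
  exact (traceNorm_smul_le _ _).trans (mul_le_mul_of_nonneg_right
    (norm_entry_le_traceNorm O a a') (traceNorm_nonneg _))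

lemma traceNorm_div_le_inducedTraceNorm (M : Matrix m m ℂ →ₗ[ℂ] Matrix n n ℂ)
    {O : Matrix m m ℂ} (hO : O ≠ 0) : traceNorm (M O) / traceNorm O ≤ inducedTraceNorm M := by
  refine le_csSup ⟨∑ a, ∑ a', traceNorm (M (single a a' 1)), ?_⟩ ⟨O, hO, rfl⟩
  rintro _ ⟨O, -, rfl⟩
  exact div_le_of_le_mul₀ (traceNorm_nonneg _)
    (Finset.sum_nonneg fun a _ => Finset.sum_nonneg fun a' _ => traceNorm_nonneg _)
    (traceNorm_apply_le_sum_single_mul M O)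

lemma inducedTraceNorm_nonneg (M : Matrix m m ℂ →ₗ[ℂ] Matrix n n ℂ) :
    0 ≤ inducedTraceNorm M :=
  Real.sSup_nonneg fun _ ⟨_, _, hx⟩ => hx ▸ div_nonneg (traceNorm_nonneg _) (traceNorm_nonneg _)

lemma traceNorm_apply_single_le (M : Matrix m m ℂ →ₗ[ℂ] Matrix n n ℂ) (a a' : m) :
    traceNorm (M (single a a' 1)) ≤ inducedTraceNorm M := by
  simpa [traceNorm_single_one] using traceNorm_div_le_inducedTraceNorm M
    (ne_of_apply_ne (· a a') (by simp) : single a a' (1 : ℂ) ≠ 0)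

end InducedTraceNorm

def tensorId {m n : Type*} (M : Matrix m m ℂ →ₗ[ℂ] Matrix n n ℂ) (e : Type*) :
    Matrix (m × e) (m × e) ℂ →ₗ[ℂ] Matrix (n × e) (n × e) ℂ where
  toFun X := of fun p q => M (of fun a a' => X (a, p.2) (a', q.2)) p.1 q.1
  map_add' X Y := by
    ext p q
    simp only [of_apply, Matrix.add_apply]
    rw [← Matrix.add_apply, ← map_add]
    rfl
  map_smul' c X := by
    ext p q
    simp only [of_apply, Matrix.smul_apply, RingHom.id_apply]
    rw [← Matrix.smul_apply, ← map_smul]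
    rfl

lemma tensorId_kronecker {m n e : Type*} (M : Matrix m m ℂ →ₗ[ℂ] Matrix n n ℂ)
    (A : Matrix m m ℂ) (R : Matrix e e ℂ) : tensorId M e (A ⊗ₖ R) = M A ⊗ₖ R := by
  ext ⟨b, i⟩ ⟨b', j⟩
  change M (of fun a a' => A a a' * R i j) b b' = M A b b' * R i j
  rw [show (of fun a a' => A a a' * R i j) = R i j • A by ext; simp [mul_comm], map_smul]
  simp [mul_comm]

lemma vecMulVec_eq_sum_single_kronecker {m e : Type*} [Fintype m] [DecidableEq m]
    (ψ φ : m × e → ℂ) :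
    vecMulVec ψ φ =
      ∑ a, ∑ a', single a a' 1 ⊗ₖ vecMulVec (fun i => ψ (a, i)) (fun j => φ (a', j)) := by
  ext ⟨a, i⟩ ⟨a', j⟩
  simp [Matrix.sum_apply, vecMulVec_apply, single_apply, ite_and]

theorem traceNorm_tensorId_vecMulVec_le {m n e : Type*} [Fintype m] [DecidableEq m]
    [Fintype n] [DecidableEq n] [Fintype e] [DecidableEq e]
    (M : Matrix m m ℂ →ₗ[ℂ] Matrix n n ℂ) (ψ : EuclideanSpace ℂ (m × e)) (hψ : ‖ψ‖ = 1) :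
    traceNorm (tensorId M e (vecMulVec ψ (star ψ))) ≤ Fintype.card m * inducedTraceNorm M := by
  set w : m → EuclideanSpace ℂ e := fun a => WithLp.toLp 2 fun i => ψ (a, i)
  have hw : ∑ a, ‖w a‖ ^ 2 = 1 := by
    rw [← one_pow 2, ← hψ, EuclideanSpace.norm_sq_eq, Fintype.sum_prod_type]
    simp only [w, EuclideanSpace.norm_sq_eq]
  have hdecomp : tensorId M e (vecMulVec ψ (star ψ)) =
      ∑ a, ∑ a', M (single a a' 1) ⊗ₖ vecMulVec (w a) (star (w a')) := by
    rw [vecMulVec_eq_sum_single_kronecker]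
    simp only [map_sum, tensorId_kronecker]
    rfl
  calc traceNorm (tensorId M e (vecMulVec ψ (star ψ)))
      ≤ ∑ a, ∑ a', traceNorm (M (single a a' 1)) * (‖w a‖ * ‖w a'‖) := by
        rw [hdecomp]
        refine (traceNorm_sum_le _ _).trans (Finset.sum_le_sum fun a _ =>
          (traceNorm_sum_le _ _).trans (Finset.sum_le_sum fun a' _ => ?_))
        rw [traceNorm_kronecker]
        exact mul_le_mul_of_nonneg_left (traceNorm_vecMulVec_le _ _) (traceNorm_nonneg _)
    _ ≤ ∑ a, ∑ a', inducedTraceNorm M * (‖w a‖ * ‖w a'‖) := by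
        gcongr with a _ a' _
        exact traceNorm_apply_single_le M a a'
    _ = inducedTraceNorm M * (∑ a, ‖w a‖) ^ 2 := by
        rw [sq, Finset.sum_mul_sum, Finset.mul_sum]
        simp_rw [Finset.mul_sum]
    _ ≤ inducedTraceNorm M * Fintype.card m := by
        gcongr
        · exact inducedTraceNorm_nonneg M
        · simpa [hw] using sq_sum_le_card_mul_sum_sq (s := Finset.univ) (f := fun a => ‖w a‖)
    _ = Fintype.card m * inducedTraceNorm M := mul_comm _ _

theorem traceNorm_tensorId_pure_le_general {dA dB : ℕ}
    (M : Matrix (Fin dA) (Fin dA) ℂ →ₗ[ℂ] Matrix (Fin dB) (Fin dB) ℂ)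
    (dE : ℕ) (Ψ : Fin dA × Fin dE → ℂ) (hΨ : star Ψ ⬝ᵥ Ψ = 1) :
    traceNorm (Matrix.of fun p q : Fin dB × Fin dE =>
        M (Matrix.of fun a a' : Fin dA =>
          vecMulVec Ψ (star Ψ) (a, p.2) (a', q.2)) p.1 q.1)
      ≤ dA * sSup {x : ℝ | ∃ O : Matrix (Fin dA) (Fin dA) ℂ, O ≠ 0 ∧
          x = traceNorm (M O) / traceNorm O} := by
  have hΨ' : ‖WithLp.toLp 2 Ψ‖ = 1 := by
    refine (pow_eq_one_iff_of_nonneg (norm_nonneg _) two_ne_zero).mp ?_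
    rw [norm_sq_eq_re_inner (𝕜 := ℂ), EuclideanSpace.inner_eq_star_dotProduct, dotProduct_comm]
    simp [hΨ]
  have h := traceNorm_tensorId_vecMulVec_le M (WithLp.toLp 2 Ψ) hΨ'
  rwa [Fintype.card_fin] at h

/-- **Diamond-norm-type bound for Hermitian-preserving maps.**
Let `M` be a Hermitian-preserving linear map from `dA×dA` to `dB×dB` matrices, and let
`‖M‖₁ = sup_{O ≠ 0} ‖M(O)‖₁/‖O‖₁` be its induced trace norm. Then for every environment
dimension `dE` and every unit vector `Ψ ∈ ℂ^{dA} ⊗ ℂ^{dE}`,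
`‖(M ⊗ id_E)(|Ψ⟩⟨Ψ|)‖₁ ≤ dA·‖M‖₁`, where `(M ⊗ id_E)(X)` is the matrix whose
`((b,e),(b',e'))` entry is `M(fun a a' => X (a,e) (a',e')) b b'`. -/
theorem traceNorm_tensorId_pure_le {dA dB : ℕ}
    (M : Matrix (Fin dA) (Fin dA) ℂ →ₗ[ℂ] Matrix (Fin dB) (Fin dB) ℂ)
    (hM : ∀ X : Matrix (Fin dA) (Fin dA) ℂ, M Xᴴ = (M X)ᴴ)
    (dE : ℕ) (Ψ : Fin dA × Fin dE → ℂ) (hΨ : star Ψ ⬝ᵥ Ψ = 1) :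
    traceNorm (Matrix.of fun p q : Fin dB × Fin dE =>
        M (Matrix.of fun a a' : Fin dA =>
          vecMulVec Ψ (star Ψ) (a, p.2) (a', q.2)) p.1 q.1)
      ≤ dA * sSup {x : ℝ | ∃ O : Matrix (Fin dA) (Fin dA) ℂ, O ≠ 0 ∧
          x = traceNorm (M O) / traceNorm O} :=
  traceNorm_tensorId_pure_le_general M dE Ψ hΨ
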